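/- Let X be a positive integer admitting a representation as a product of degree d with base b and spread s, where s + 1 < d. Then rad(X) ≤ e^{2s²/b} · X^{(s+1)/d}, where the inequality is between real numbers and X^{(s+1)/d} denotes the real power. -/

import Mathlib

/-- The radical of a natural number: the product of its distinct prime divisors. -/
def rad (n : ℕ) : ℕ := ∏ p ∈ n.primeFactors, p

/-- `IsProductRep X d b s` : `X` admits a representation as a product of `d` positive
integers with base (minimum) `b` and spread (max − min) `s`. -/
def IsProductRep (X d b s : ℕ) : Prop :=
  ∃ f : Fin d → ℕ, (∀ i, 0 < f i) ∧ (∏ i, f i) = X ∧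
    (∀ i, b ≤ f i ∧ f i ≤ b + s) ∧ (∃ i, f i = b) ∧ (∃ i, f i = b + s)

/-!
Every prime factor of `X = x₁ ⋯ x_d` divides some `xᵢ ∈ [b, b + s]`, so `rad X` divides
`b (b + 1) ⋯ (b + s) ≤ (b + s)^(s+1) = b^(s+1) (1 + s/b)^(s+1) ≤ e^((s+1)s/b) b^(s+1)`.
Since every factor is at least `b`, we have `b^d ≤ X`, i.e. `b^(s+1) ≤ X^((s+1)/d)`.
-/

open Finset

theorem rad_prod_dvd_prod_of_mapsTo {ι : Type*} (t : Finset ι) (f : ι → ℕ) (S : Finset ℕ)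
    (hS : 0 ∉ S) (hf : ∀ i ∈ t, f i ∈ S) : rad (∏ i ∈ t, f i) ∣ ∏ v ∈ S, v := by
  have hS0 : ∏ v ∈ S, v ≠ 0 := prod_ne_zero_iff.2 fun v hv h ↦ hS (h ▸ hv)
  rw [rad, Nat.prod_primeFactors_dvd_iff hS0]
  intro p hp
  obtain ⟨hp, hpdvd, -⟩ := Nat.mem_primeFactors.1 hp
  obtain ⟨i, hi, hpi⟩ := hp.prime.exists_mem_finset_dvd hpdvd
  exact Nat.mem_primeFactors.2 ⟨hp, hpi.trans (dvd_prod_of_mem _ (hf i hi)), hS0⟩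

theorem prod_Icc_le_pow (b s : ℕ) : ∏ v ∈ Icc b (b + s), v ≤ (b + s) ^ (s + 1) := by
  calc ∏ v ∈ Icc b (b + s), v ≤ (b + s) ^ #(Icc b (b + s)) :=
        prod_le_pow_card _ _ _ fun v hv ↦ (mem_Icc.1 hv).2
    _ = (b + s) ^ (s + 1) := by rw [Nat.card_Icc]; congr 1; omega

theorem Real.add_pow_le_exp_mul_pow {b x : ℝ} (hb : 0 < b) (hbx : 0 ≤ b + x) (n : ℕ) :
    (b + x) ^ n ≤ exp (n * x / b) * b ^ n := by
  have hsplit : b + x = (1 + x / b) * b := by field_simp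
  have hnonneg : 0 ≤ 1 + x / b := by rw [← div_self hb.ne', ← add_div]; positivity
  rw [hsplit, mul_pow, mul_div_assoc, exp_nat_mul]
  gcongr
  linarith [add_one_le_exp (x / b)]

theorem Real.pow_le_rpow_div_of_pow_le {b X : ℝ} {d : ℕ} (hb : 0 ≤ b) (hd : d ≠ 0)
    (h : b ^ d ≤ X) (n : ℕ) : b ^ n ≤ X ^ ((n : ℝ) / d) := by
  calc b ^ n = (b ^ d) ^ ((n : ℝ) / d) := by
        rw [← rpow_natCast b d, ← rpow_mul hb, mul_div_cancel₀ _ (by exact_mod_cast hd),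
          rpow_natCast]
    _ ≤ X ^ ((n : ℝ) / d) := by gcongr

namespace IsProductRep

variable {X d b s : ℕ}

theorem base_pos (h : IsProductRep X d b s) : 0 < b := by
  obtain ⟨f, hpos, -, -, ⟨i, hi⟩, -⟩ := h
  exact hi ▸ hpos i

theorem degree_pos (h : IsProductRep X d b s) : 0 < d := by
  obtain ⟨-, -, -, -, ⟨i, -⟩, -⟩ := h
  exact i.pos

theorem pow_base_le (h : IsProductRep X d b s) : b ^ d ≤ X := by
  obtain ⟨f, -, rfl, hbound, -⟩ := h
  calc b ^ d = ∏ _i : Fin d, b := by simp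
    _ ≤ ∏ i, f i := prod_le_prod' fun i _ ↦ (hbound i).1

theorem rad_le (h : IsProductRep X d b s) : rad X ≤ (b + s) ^ (s + 1) := by
  have hb := h.base_pos
  obtain ⟨f, -, rfl, hbound, -⟩ := h
  have hdvd := rad_prod_dvd_prod_of_mapsTo univ f (Icc b (b + s))
    (fun h0 ↦ (mem_Icc.1 h0).1.not_gt hb) fun i _ ↦ mem_Icc.2 (hbound i)
  exact (Nat.le_of_dvd (prod_pos fun v hv ↦ hb.trans_le (mem_Icc.1 hv).1) hdvd).trans
    (prod_Icc_le_pow b s)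

end IsProductRep

theorem stmt_3_general (X d b s : ℕ) (hrep : IsProductRep X d b s) :
    (rad X : ℝ) ≤ Real.exp (2 * (s : ℝ) ^ 2 / b) * (X : ℝ) ^ (((s : ℝ) + 1) / d) := by
  have hb : (0 : ℝ) < b := by exact_mod_cast hrep.base_pos
  have hexp : ((s + 1 : ℕ) : ℝ) * s / b ≤ 2 * (s : ℝ) ^ 2 / b := by
    refine div_le_div_of_nonneg_right ?_ hb.le
    exact_mod_cast (show (s + 1) * s ≤ 2 * s ^ 2 by nlinarith [Nat.le_self_pow two_ne_zero s])
  calc (rad X : ℝ) ≤ ((b : ℝ) + s) ^ (s + 1) := by exact_mod_cast hrep.rad_le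
    _ ≤ Real.exp (((s + 1 : ℕ) : ℝ) * s / b) * (b : ℝ) ^ (s + 1) :=
        Real.add_pow_le_exp_mul_pow hb (by positivity) (s + 1)
    _ ≤ Real.exp (2 * (s : ℝ) ^ 2 / b) * (X : ℝ) ^ (((s : ℝ) + 1) / d) := by
        gcongr
        exact_mod_cast Real.pow_le_rpow_div_of_pow_le hb.le hrep.degree_pos.ne'
          (by exact_mod_cast hrep.pow_base_le) (s + 1)

theorem stmt_3 (X d b s : ℕ) (hX : 0 < X) (hrep : IsProductRep X d b s)
    (hsd : s + 1 < d) :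
    (rad X : ℝ) ≤ Real.exp (2 * (s : ℝ) ^ 2 / b) * (X : ℝ) ^ (((s : ℝ) + 1) / d) :=
  stmt_3_general X d b s hrep
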